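/- Let P, P_iso, P_L be binary bipartite conditional distributions (boxes), with P = q·P_iso + (1-q)·P_L a convex combination, q ∈ [0,1]. Then for every deterministic distillation protocol on n copies of P achieving CHSH value v, there exists a deterministic distillation protocol on n copies of P_iso achieving CHSH value at least v; in particular D(n,P) ≤ D(n,P_iso), where D(n,·) denotes the maximal CHSH value achievable by any deterministic protocol on n copies. -/

import Mathlib

open Finset

/-- A binary bipartite box: for each input pair `(x,y) ∈ {0,1}²` a (sub)distribution
on output pairs `(a,b) ∈ {0,1}²`. -/
abbrev BinBox : Type := Bool → Bool → Bool × Bool → ℝ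

/-- `P` assigns a genuine probability distribution to every input pair. -/
def IsBox (P : BinBox) : Prop :=
  (∀ x y ab, 0 ≤ P x y ab) ∧ ∀ x y, ∑ ab : Bool × Bool, P x y ab = 1

/-- Nonsignaling: each party's marginal is independent of the other party's input. -/
def NonSignaling (P : BinBox) : Prop :=
  (∀ x y y' a, ∑ b : Bool, P x y (a, b) = ∑ b : Bool, P x y' (a, b)) ∧
  (∀ x x' y b, ∑ a : Bool, P x y (a, b) = ∑ a : Bool, P x' y (a, b))

/-- A local box: a convex combination of deterministic local strategies. -/
def IsLocalBox (P : BinBox) : Prop :=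
  ∃ c : (Bool → Bool) × (Bool → Bool) → ℝ,
    (∀ s, 0 ≤ c s) ∧ (∑ s : (Bool → Bool) × (Bool → Bool), c s = 1) ∧
    ∀ x y a b, P x y (a, b) =
      ∑ s : (Bool → Bool) × (Bool → Bool),
        c s * (if s.1 x = a ∧ s.2 y = b then 1 else 0)

/-- A deterministic nonlocality distillation protocol on `n` copies of a binary box:
Alice accesses the boxes in the order `1,…,n` (the indexing of the copies follows her
temporal order), Bob accesses them in the temporal order given by the permutation `σ`
(so the wiring may be ordered or disordered); each party's input into a box may depend
(deterministically) on its protocol input and on the outputs of the boxes it has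
already used; finally both parties output one bit computed from their protocol input
and all collected outputs. -/
structure Protocol (n : ℕ) where
  /-- Bob's temporal order: at his step `t` he uses box `σ t`. -/
  σ : Equiv.Perm (Fin n)
  /-- Alice's input into box `i`, given protocol input `x` and her outputs `a`. -/
  Ain : Bool → Fin n → (Fin n → Bool) → Bool
  /-- Bob's input into box `i`, given protocol input `y` and his outputs `b`. -/
  Bin : Bool → Fin n → (Fin n → Bool) → Bool
  /-- Alice's input into box `i` depends only on outputs of boxes used before `i`. -/
  Ain_causal : ∀ x i a a', (∀ j, j < i → a j = a' j) → Ain x i a = Ain x i a'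
  /-- Bob's input into box `i` depends only on outputs of boxes he used before `i`. -/
  Bin_causal : ∀ y i b b', (∀ j, σ.symm j < σ.symm i → b j = b' j) → Bin y i b = Bin y i b'
  /-- Alice's decision functions `f₀, f₁`. -/
  f : Bool → (Fin n → Bool) → Bool
  /-- Bob's decision functions `g₀, g₁`. -/
  g : Bool → (Fin n → Bool) → Bool

/-- The joint wiring distribution `W^{xy}(a,b)` generated by a protocol on `n`
copies of the box `P`. -/
noncomputable def wiringDist (n : ℕ) (P : BinBox) (DP : Protocol n) (x y : Bool)
    (a b : Fin n → Bool) : ℝ :=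
  ∏ i : Fin n, P (DP.Ain x i a) (DP.Bin y i b) (a i, b i)

/-- The correlation `⟨f_x,g_y⟩` of the box simulated by the protocol. -/
noncomputable def protCorr (n : ℕ) (P : BinBox) (DP : Protocol n) (x y : Bool) : ℝ :=
  ∑ a : Fin n → Bool, ∑ b : Fin n → Bool,
    wiringDist n P DP x y a b * (1 - 2 * (if DP.f x a then (1 : ℝ) else 0)) *
      (1 - 2 * (if DP.g y b then (1 : ℝ) else 0))

/-- The CHSH value of a protocol:
`max_{xy} |⟨f_x,g_y⟩ + ⟨f_x̄,g_y⟩ + ⟨f_x,g_ȳ⟩ - ⟨f_x̄,g_ȳ⟩|`. -/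
noncomputable def NLval (n : ℕ) (P : BinBox) (DP : Protocol n) : ℝ :=
  ⨆ xy : Bool × Bool,
    |protCorr n P DP xy.1 xy.2 + protCorr n P DP (!xy.1) xy.2 +
      protCorr n P DP xy.1 (!xy.2) - protCorr n P DP (!xy.1) (!xy.2)|

/-- The distillable nonlocality of `n` copies of `P`: the optimal CHSH value over
all deterministic distillation protocols. -/
noncomputable def Dnl (n : ℕ) (P : BinBox) : ℝ := ⨆ DP : Protocol n, NLval n P DP

/-!
Writing `P_L` as a mixture of deterministic local boxes, `n` copies of `P` become a mixture, over
patterns `lam : Fin n → Option Strat`, of product boxes whose `i`-th factor is `P_iso` or the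
deterministic box `lam i`, and the correlations of a protocol are multilinear in these factors.
Each party can compute the output of a deterministic copy itself from its own input into that
copy, which depends only on earlier outputs; so on each mixed product box the protocol has the
same correlations as a lifted protocol on `n` genuine copies of `P_iso` that ignores their outputs
at the local positions. The CHSH value is convex in the correlations, so one of the lifted
protocols does at least as well.
-/

section LocalSimulation

variable {ι : Type*}

def Causal (rk : ι → ℕ) (inp : ι → (ι → Bool) → Bool) : Prop :=
  ∀ i a a', (∀ j, rk j < rk i → a j = a' j) → inp i a = inp i a'

variable (rk : ι → ℕ) (inp : ι → (ι → Bool) → Bool)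
  (loc : ι → Option (Bool → Bool))

/-- The outputs a party sees when each copy `i` with `loc i = some s` is replaced by the
deterministic box answering `s` to the party's input into it, while the other copies keep their
outputs `a i`. The `false` branch is never read when `inp` is causal. -/
def simOut (a : ι → Bool) (i : ι) : Bool :=
  match loc i with
  | none => a i
  | some s => s (inp i fun j => if _ : rk j < rk i then simOut a j else false)
termination_by rk i

variable {rk inp loc}

lemma rank_induction {Q : ι → Prop} (h : ∀ i, (∀ j, rk j < rk i → Q j) → Q i) (i : ι) :
    Q i :=
  (measure rk).wf.induction i h

lemma simOut_of_none {a : ι → Bool} {i : ι} (h : loc i = none) :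
    simOut rk inp loc a i = a i := by
  rw [simOut, h]

lemma simOut_of_some (hc : Causal rk inp) {a : ι → Bool} {i : ι} {s : Bool → Bool}
    (h : loc i = some s) : simOut rk inp loc a i = s (inp i (simOut rk inp loc a)) := by
  rw [simOut, h]
  exact congrArg s (hc i _ _ fun j hj => dif_pos hj)

lemma simOut_congr (hc : Causal rk inp) {a a' : ι → Bool} (i : ι)
    (h : ∀ k, rk k ≤ rk i → loc k = none → a k = a' k) :
    simOut rk inp loc a i = simOut rk inp loc a' i := by
  induction i using rank_induction (rk := rk) with
  | h i ih =>
    rcases hi : loc i with _ | s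
    · rw [simOut_of_none hi, simOut_of_none hi]
      exact h i le_rfl hi
    · rw [simOut_of_some hc hi, simOut_of_some hc hi]
      exact congrArg s (hc i _ _ fun j hj =>
        ih j hj fun k hk => h k (hk.trans hj.le))

lemma simOut_simOut (hc : Causal rk inp) (a : ι → Bool) :
    simOut rk inp loc (simOut rk inp loc a) = simOut rk inp loc a :=
  funext fun i => simOut_congr hc i fun _ _ hk => simOut_of_none hk

lemma simOut_eq_self_iff (hc : Causal rk inp) {a : ι → Bool} :
    simOut rk inp loc a = a ↔ ∀ i s, loc i = some s → s (inp i a) = a i := by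
  refine ⟨fun h i s hi => ?_, fun h => funext fun i => ?_⟩
  · have e := simOut_of_some (a := a) hc hi
    rw [h] at e
    exact e.symm
  · induction i using rank_induction (rk := rk) with
    | h i ih =>
      rcases hi : loc i with _ | s
      · exact simOut_of_none hi
      · rw [simOut_of_some hc hi, hc i _ _ ih, h i s hi]

lemma Causal.simOut (hc : Causal rk inp) : Causal rk fun i a => inp i (simOut rk inp loc a) :=
  fun i _ _ h => hc i _ _ fun j hj => simOut_congr hc j fun k hk _ => h k (hk.trans_lt hj)

end LocalSimulation

section Cylinder

variable {ι : Type*} [Fintype ι] [DecidableEq ι] (p : ι → Prop) [DecidablePred p]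

def cylinder (c : ι → Bool) : Finset (ι → Bool) :=
  Fintype.piFinset fun i => if p i then {c i} else univ

variable {p}

lemma mem_cylinder {a c : ι → Bool} : a ∈ cylinder p c ↔ ∀ i, p i → a i = c i := by
  simp only [cylinder, Fintype.mem_piFinset]
  refine forall_congr' fun i => ?_
  split_ifs with hi <;> simp [hi]

lemma sum_cylinder_prod (g : ι → Bool × Bool → ℝ) (c d : ι → Bool) :
    ∑ a ∈ cylinder p c, ∑ b ∈ cylinder p d, ∏ i, g i (a i, b i) =
      ∏ i, if p i then g i (c i, d i) else ∑ ab, g i ab := by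
  let S : (ι → Bool) → ι → Finset Bool := fun c i => if p i then {c i} else univ
  calc ∑ a ∈ Fintype.piFinset (S c), ∑ b ∈ Fintype.piFinset (S d), ∏ i, g i (a i, b i)
      = ∑ a ∈ Fintype.piFinset (S c), ∏ i, ∑ β ∈ S d i, g i (a i, β) :=
        Finset.sum_congr rfl fun a _ => (Finset.prod_univ_sum _ fun i β => g i (a i, β)).symm
    _ = ∏ i, ∑ α ∈ S c i, ∑ β ∈ S d i, g i (α, β) :=
        (Finset.prod_univ_sum _ fun i α => ∑ β ∈ S d i, g i (α, β)).symm
    _ = _ := Finset.prod_congr rfl fun i _ => by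
        by_cases hi : p i
        · simp [S, hi]
        · simp only [S, hi, if_false, ← Finset.sum_product', univ_product_univ]

end Cylinder

lemma sum_simOut {ι : Type*} [Fintype ι] [DecidableEq ι] {rk : ι → ℕ}
    {inp : ι → (ι → Bool) → Bool} {loc : ι → Option (Bool → Bool)} (hc : Causal rk inp)
    (h : (ι → Bool) → (ι → Bool) → ℝ) :
    ∑ a, h (simOut rk inp loc a) a =
      ∑ c, if simOut rk inp loc c = c then ∑ a ∈ cylinder (loc · = none) c, h c a
        else 0 := by
  rw [← Finset.sum_fiberwise univ (simOut rk inp loc)]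
  refine Finset.sum_congr rfl fun c _ => ?_
  split_ifs with hfix
  · have hfiber : univ.filter (simOut rk inp loc · = c) = cylinder (loc · = none) c := by
      ext a
      simp only [mem_filter, mem_univ, true_and, mem_cylinder]
      refine ⟨fun ha i hi => ?_, fun ha => ?_⟩
      · rw [← ha, simOut_of_none hi]
      · rw [← hfix]
        exact funext fun i => simOut_congr hc i fun k _ hk => ha k hk
    rw [hfiber]
    exact Finset.sum_congr rfl fun a ha => by
      rw [← hfiber, mem_filter] at ha
      rw [ha.2]
  · refine Finset.sum_eq_zero fun a ha => absurd ?_ hfix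
    rw [(mem_filter.mp ha).2.symm, simOut_simOut hc]

abbrev Strat : Type := (Bool → Bool) × (Bool → Bool)

def detBox (s : Strat) : BinBox := fun u v ab => if s.1 u = ab.1 ∧ s.2 v = ab.2 then 1 else 0

def componentBox (B : BinBox) : Option Strat → BinBox
  | none => B
  | some s => detBox s

lemma exists_componentBox_weights {P Piso PL : BinBox} (hPL : IsLocalBox PL) {q : ℝ}
    (hq0 : 0 ≤ q) (hq1 : q ≤ 1)
    (hmix : ∀ x y ab, P x y ab = q * Piso x y ab + (1 - q) * PL x y ab) :
    ∃ w : Option Strat → ℝ, (∀ o, 0 ≤ w o) ∧ ∑ o, w o = 1 ∧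
      ∀ u v ab, P u v ab = ∑ o, w o * componentBox Piso o u v ab := by
  obtain ⟨c, hc0, hc1, hcPL⟩ := hPL
  refine ⟨fun o => o.elim q fun s => (1 - q) * c s, ?_, ?_, ?_⟩
  · rintro (_ | s)
    · exact hq0
    · exact mul_nonneg (sub_nonneg.mpr hq1) (hc0 s)
  · simp [Fintype.sum_option, ← mul_sum, hc1]
  · rintro u v ⟨α, β⟩
    simp only [hmix, hcPL, Fintype.sum_option, mul_sum, componentBox, detBox, Option.elim,
      mul_assoc]

def spin (t : Bool) : ℝ := 1 - 2 * if t then 1 else 0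

lemma abs_spin_le_one (t : Bool) : |spin t| ≤ 1 := by
  cases t <;> norm_num [spin]

variable {n : ℕ}

def wiredCorr (B : Fin n → BinBox) (DP : Protocol n) (x y : Bool) : ℝ :=
  ∑ a, ∑ b, (∏ i, B i (DP.Ain x i a) (DP.Bin y i b) (a i, b i)) *
    spin (DP.f x a) * spin (DP.g y b)

lemma protCorr_eq_wiredCorr (P : BinBox) (DP : Protocol n) (x y : Bool) :
    protCorr n P DP x y = wiredCorr (fun _ => P) DP x y := rfl

lemma wiredCorr_const_eq_sum {O : Type*} [Fintype O] {P : BinBox} (K : O → BinBox) (w : O → ℝ)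
    (hP : ∀ u v ab, P u v ab = ∑ o, w o * K o u v ab) (DP : Protocol n) (x y : Bool) :
    wiredCorr (fun _ => P) DP x y =
      ∑ lam : Fin n → O, (∏ i, w (lam i)) * wiredCorr (fun i => K (lam i)) DP x y := by
  have hprod : ∀ a b : Fin n → Bool, ∏ i, P (DP.Ain x i a) (DP.Bin y i b) (a i, b i) =
      ∑ lam : Fin n → O,
        (∏ i, w (lam i)) * ∏ i, K (lam i) (DP.Ain x i a) (DP.Bin y i b) (a i, b i) := by
    intro a b
    simp only [hP, Fintype.prod_sum, prod_mul_distrib]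
  simp only [wiredCorr, hprod, sum_mul, mul_sum, mul_assoc]
  rw [sum_congr rfl fun a _ => sum_comm, sum_comm]

namespace Protocol

variable (DP : Protocol n) (lam : Fin n → Option Strat)

def aliceSim (x : Bool) : (Fin n → Bool) → Fin n → Bool :=
  simOut Fin.val (DP.Ain x) fun i => (lam i).map Prod.fst

def bobSim (y : Bool) : (Fin n → Bool) → Fin n → Bool :=
  simOut (fun i => (DP.σ.symm i).val) (DP.Bin y) fun i => (lam i).map Prod.snd

lemma causal_Ain (x : Bool) : Causal Fin.val (DP.Ain x) := DP.Ain_causal x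

lemma causal_Bin (y : Bool) : Causal (fun i => (DP.σ.symm i).val) (DP.Bin y) := DP.Bin_causal y

/-- Run `DP` on genuine copies, replacing the outputs of the copies that `lam` marks as local by
their simulated values. -/
def lift : Protocol n where
  σ := DP.σ
  Ain x i a := DP.Ain x i (DP.aliceSim lam x a)
  Bin y i b := DP.Bin y i (DP.bobSim lam y b)
  Ain_causal x := (DP.causal_Ain x).simOut
  Bin_causal y := (DP.causal_Bin y).simOut
  f x a := DP.f x (DP.aliceSim lam x a)
  g y b := DP.g y (DP.bobSim lam y b)

lemma aliceSim_eq_self_and_bobSim_eq_self_iff (x y : Bool) (a b : Fin n → Bool) :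
    DP.aliceSim lam x a = a ∧ DP.bobSim lam y b = b ↔
      ∀ i s, lam i = some s → s.1 (DP.Ain x i a) = a i ∧ s.2 (DP.Bin y i b) = b i := by
  simp only [aliceSim, bobSim, simOut_eq_self_iff (DP.causal_Ain x),
    simOut_eq_self_iff (DP.causal_Bin y), Option.map_eq_some_iff, forall_exists_index, and_imp,
    forall_apply_eq_imp_iff₂, ← forall_and]

lemma prod_componentBox (B : BinBox) (x y : Bool) (a b : Fin n → Bool) :
    ∏ i, componentBox B (lam i) (DP.Ain x i a) (DP.Bin y i b) (a i, b i) =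
      if DP.aliceSim lam x a = a ∧ DP.bobSim lam y b = b then
        ∏ i, if lam i = none then B (DP.Ain x i a) (DP.Bin y i b) (a i, b i) else 1
      else 0 := by
  have factor : ∀ i, componentBox B (lam i) (DP.Ain x i a) (DP.Bin y i b) (a i, b i) =
      (if lam i = none then B (DP.Ain x i a) (DP.Bin y i b) (a i, b i) else 1) *
        if ∀ s, lam i = some s → s.1 (DP.Ain x i a) = a i ∧ s.2 (DP.Bin y i b) = b i
        then 1 else 0 := by
    intro i
    rcases lam i with _ | s <;> simp [componentBox, detBox]
  rw [prod_congr rfl fun i _ => factor i, prod_mul_distrib, prod_boole]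
  simp only [mem_univ, true_implies, ← aliceSim_eq_self_and_bobSim_eq_self_iff]
  split_ifs <;> simp

lemma sum_aliceSim (x : Bool) (h : (Fin n → Bool) → (Fin n → Bool) → ℝ) :
    ∑ a, h (DP.aliceSim lam x a) a =
      ∑ c, if DP.aliceSim lam x c = c then ∑ a ∈ cylinder (lam · = none) c, h c a
        else 0 := by
  rw [aliceSim, sum_simOut (DP.causal_Ain x)]
  simp only [Option.map_eq_none_iff]

lemma sum_bobSim (y : Bool) (h : (Fin n → Bool) → (Fin n → Bool) → ℝ) :
    ∑ b, h (DP.bobSim lam y b) b =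
      ∑ d, if DP.bobSim lam y d = d then ∑ b ∈ cylinder (lam · = none) d, h d b
        else 0 := by
  rw [bobSim, sum_simOut (DP.causal_Bin y)]
  simp only [Option.map_eq_none_iff]

/-- The simulated outputs only read the genuine outputs of the copies with `lam i = none`, so
summing out the other genuine outputs uses only the normalisation of `B`. -/
lemma protCorr_lift {B : BinBox} (hB : ∀ u v, ∑ ab, B u v ab = 1) (x y : Bool) :
    protCorr n B (DP.lift lam) x y = wiredCorr (fun i => componentBox B (lam i)) DP x y := by
  set F : (Fin n → Bool) → (Fin n → Bool) → (Fin n → Bool) → (Fin n → Bool) → ℝ :=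
    fun c d a b => (∏ i, B (DP.Ain x i c) (DP.Bin y i d) (a i, b i)) *
      (spin (DP.f x c) * spin (DP.g y d))
  have hF : ∀ c d,
      ∑ a ∈ cylinder (lam · = none) c, ∑ b ∈ cylinder (lam · = none) d, F c d a b =
        (∏ i, if lam i = none then B (DP.Ain x i c) (DP.Bin y i d) (c i, d i) else 1) *
          (spin (DP.f x c) * spin (DP.g y d)) := by
    intro c d
    simp only [F, ← sum_mul]
    rw [sum_cylinder_prod (fun i => B (DP.Ain x i c) (DP.Bin y i d))]
    simp only [hB]
  calc protCorr n B (DP.lift lam) x y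
      = ∑ a, ∑ b, F (DP.aliceSim lam x a) (DP.bobSim lam y b) a b := by
        simp only [protCorr, wiringDist, lift, mul_assoc, F]
        rfl
    _ = ∑ a, ∑ d, if DP.bobSim lam y d = d then
          ∑ b ∈ cylinder (lam · = none) d, F (DP.aliceSim lam x a) d a b else 0 :=
        sum_congr rfl fun a _ => DP.sum_bobSim lam y fun d b => F (DP.aliceSim lam x a) d a b
    _ = ∑ c, if DP.aliceSim lam x c = c then ∑ a ∈ cylinder (lam · = none) c, ∑ d,
          (if DP.bobSim lam y d = d then ∑ b ∈ cylinder (lam · = none) d, F c d a b else 0)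
          else 0 :=
        DP.sum_aliceSim lam x fun c a => ∑ d, if DP.bobSim lam y d = d then
          ∑ b ∈ cylinder (lam · = none) d, F c d a b else 0
    _ = ∑ c, ∑ d, if DP.aliceSim lam x c = c ∧ DP.bobSim lam y d = d then
          ∑ a ∈ cylinder (lam · = none) c, ∑ b ∈ cylinder (lam · = none) d, F c d a b
          else 0 := by
        refine sum_congr rfl fun c _ => ?_
        rw [sum_comm]
        simp only [sum_ite_irrel, sum_const_zero, ite_and]
    _ = wiredCorr (fun i => componentBox B (lam i)) DP x y := by
        simp only [hF, wiredCorr, prod_componentBox, mul_assoc]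
        refine sum_congr rfl fun c _ => sum_congr rfl fun d _ => ?_
        split_ifs <;> simp

end Protocol

def chshSum (C : Bool → Bool → ℝ) (x y : Bool) : ℝ :=
  C x y + C (!x) y + C x (!y) - C (!x) (!y)

noncomputable def chshValue (C : Bool → Bool → ℝ) : ℝ :=
  ⨆ xy : Bool × Bool, |chshSum C xy.1 xy.2|

lemma NLval_eq_chshValue (P : BinBox) (DP : Protocol n) :
    NLval n P DP = chshValue (protCorr n P DP) := rfl

lemma abs_chshSum_le_chshValue (C : Bool → Bool → ℝ) (x y : Bool) :
    |chshSum C x y| ≤ chshValue C :=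
  le_ciSup (f := fun xy : Bool × Bool => |chshSum C xy.1 xy.2|) (Finite.bddAbove_range _) (x, y)

lemma chshValue_le_of_abs_le {C : Bool → Bool → ℝ} {M : ℝ} (h : ∀ x y, |C x y| ≤ M) :
    chshValue C ≤ 4 * M :=
  ciSup_le fun ⟨x, y⟩ => by
    have h₁ := abs_le.mp (h x y)
    have h₂ := abs_le.mp (h (!x) y)
    have h₃ := abs_le.mp (h x (!y))
    have h₄ := abs_le.mp (h (!x) (!y))
    rw [chshSum, abs_le]
    constructor <;> linarith

lemma chshValue_le_sum {ι : Type*} [Fintype ι] {C : Bool → Bool → ℝ}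
    {D : ι → Bool → Bool → ℝ} {w : ι → ℝ} (hw : ∀ i, 0 ≤ w i)
    (hC : ∀ x y, C x y = ∑ i, w i * D i x y) :
    chshValue C ≤ ∑ i, w i * chshValue (D i) :=
  ciSup_le fun ⟨x, y⟩ => calc
    |chshSum C x y| = |∑ i, w i * chshSum (D i) x y| := by
        simp only [chshSum, hC, mul_add, mul_sub, sum_add_distrib, sum_sub_distrib]
    _ ≤ ∑ i, |w i * chshSum (D i) x y| := abs_sum_le_sum_abs _ _
    _ ≤ ∑ i, w i * chshValue (D i) := sum_le_sum fun i _ => by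
        rw [abs_mul, abs_of_nonneg (hw i)]
        exact mul_le_mul_of_nonneg_left (abs_chshSum_le_chshValue _ x y) (hw i)

lemma exists_chshValue_le_of_eq_sum {ι : Type*} [Fintype ι] [Nonempty ι]
    {C : Bool → Bool → ℝ} {D : ι → Bool → Bool → ℝ} {w : ι → ℝ}
    (hw₀ : ∀ i, 0 ≤ w i) (hw₁ : ∑ i, w i = 1)
    (hC : ∀ x y, C x y = ∑ i, w i * D i x y) :
    ∃ i, chshValue C ≤ chshValue (D i) := by
  obtain ⟨i₀, hi₀⟩ := Finite.exists_max fun i => chshValue (D i)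
  refine ⟨i₀, ?_⟩
  calc chshValue C ≤ ∑ i, w i * chshValue (D i) := chshValue_le_sum hw₀ hC
    _ ≤ ∑ i, w i * chshValue (D i₀) :=
        sum_le_sum fun i _ => mul_le_mul_of_nonneg_left (hi₀ i) (hw₀ i)
    _ = chshValue (D i₀) := by rw [← sum_mul, hw₁, one_mul]

lemma IsBox.le_one {B : BinBox} (hB : IsBox B) (u v : Bool) (ab : Bool × Bool) : B u v ab ≤ 1 :=
  (single_le_sum (fun ab _ => hB.1 u v ab) (mem_univ ab)).trans_eq (hB.2 u v)

lemma abs_wiredCorr_le {B : Fin n → BinBox} (hB : ∀ i, IsBox (B i)) (DP : Protocol n)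
    (x y : Bool) : |wiredCorr B DP x y| ≤ Fintype.card (Fin n → Bool) ^ 2 := by
  have hterm : ∀ a b, |(∏ i, B i (DP.Ain x i a) (DP.Bin y i b) (a i, b i)) *
      spin (DP.f x a) * spin (DP.g y b)| ≤ 1 := by
    intro a b
    have hprod : |∏ i, B i (DP.Ain x i a) (DP.Bin y i b) (a i, b i)| ≤ 1 := by
      rw [abs_of_nonneg (prod_nonneg fun i _ => (hB i).1 _ _ _)]
      exact prod_le_one (fun i _ => (hB i).1 _ _ _) fun i _ => (hB i).le_one _ _ _
    rw [abs_mul, abs_mul]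
    exact mul_le_one₀ (mul_le_one₀ hprod (abs_nonneg _) (abs_spin_le_one _)) (abs_nonneg _)
      (abs_spin_le_one _)
  calc |wiredCorr B DP x y|
      ≤ ∑ a, ∑ b, |(∏ i, B i (DP.Ain x i a) (DP.Bin y i b) (a i, b i)) *
          spin (DP.f x a) * spin (DP.g y b)| :=
        (abs_sum_le_sum_abs _ _).trans (sum_le_sum fun a _ => abs_sum_le_sum_abs _ _)
    _ ≤ ∑ _a : Fin n → Bool, ∑ _b : Fin n → Bool, (1 : ℝ) :=
        sum_le_sum fun a _ => sum_le_sum fun b _ => hterm a b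
    _ = Fintype.card (Fin n → Bool) ^ 2 := by simp [sq]

instance (n : ℕ) : Nonempty (Protocol n) :=
  ⟨{ σ := 1, Ain := fun _ _ _ => false, Bin := fun _ _ _ => false,
     Ain_causal := fun _ _ _ _ _ => rfl, Bin_causal := fun _ _ _ _ _ => rfl,
     f := fun _ _ => false, g := fun _ _ => false }⟩

lemma Dnl_le_of_forall_exists_NLval_le {P Q : BinBox} (hQ : IsBox Q)
    (h : ∀ DP : Protocol n, ∃ DP' : Protocol n, NLval n P DP ≤ NLval n Q DP') :
    Dnl n P ≤ Dnl n Q := by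
  have hbdd : BddAbove (Set.range (NLval n Q)) := by
    refine ⟨4 * Fintype.card (Fin n → Bool) ^ 2, Set.forall_mem_range.2 fun DP => ?_⟩
    rw [NLval_eq_chshValue]
    exact chshValue_le_of_abs_le fun x y => by
      rw [protCorr_eq_wiredCorr]
      exact abs_wiredCorr_le (fun _ => hQ) DP x y
  exact ciSup_le fun DP => (h DP).elim fun DP' hDP' => hDP'.trans (le_ciSup hbdd DP')

theorem distillable_nonlocality_le_general (n : ℕ) (P Piso PL : BinBox)
    (hPiso : IsBox Piso)
    (hPLloc : IsLocalBox PL)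
    (q : ℝ) (hq0 : 0 ≤ q) (hq1 : q ≤ 1)
    (hmix : ∀ x y ab, P x y ab = q * Piso x y ab + (1 - q) * PL x y ab) :
    (∀ DP : Protocol n, ∃ DP' : Protocol n, NLval n P DP ≤ NLval n Piso DP') ∧
    Dnl n P ≤ Dnl n Piso := by
  obtain ⟨w, hw₀, hw₁, hPw⟩ := exists_componentBox_weights hPLloc hq0 hq1 hmix
  have hlift (DP : Protocol n) : ∃ DP' : Protocol n, NLval n P DP ≤ NLval n Piso DP' := by
    have hcorr (x y : Bool) : protCorr n P DP x y =
        ∑ lam : Fin n → Option Strat,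
          (∏ i, w (lam i)) * protCorr n Piso (DP.lift lam) x y := by
      simp only [protCorr_eq_wiredCorr P, wiredCorr_const_eq_sum _ w hPw,
        DP.protCorr_lift _ hPiso.2]
    have hweights : ∑ lam : Fin n → Option Strat, ∏ i, w (lam i) = 1 := by
      rw [← Fintype.prod_sum]
      simp [hw₁]
    obtain ⟨lam, hlam⟩ :=
      exists_chshValue_le_of_eq_sum (fun lam => prod_nonneg fun i _ => hw₀ (lam i)) hweights hcorr
    exact ⟨DP.lift lam, by rwa [NLval_eq_chshValue, NLval_eq_chshValue]⟩
  exact ⟨hlift, Dnl_le_of_forall_exists_NLval_le hPiso hlift⟩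

/-- If `P = q·P_iso + (1-q)·P_L` is a convex combination of a box
`P_iso` and a local box `P_L`, then every deterministic distillation protocol on `n`
copies of `P` can be matched by one on `n` copies of `P_iso` achieving at least the
same CHSH value; in particular `D(n,P) ≤ D(n,P_iso)`. -/
theorem distillable_nonlocality_le (n : ℕ) (P Piso PL : BinBox)
    (hP : IsBox P) (hPns : NonSignaling P)
    (hPiso : IsBox Piso) (hPisons : NonSignaling Piso)
    (hPL : IsBox PL) (hPLns : NonSignaling PL) (hPLloc : IsLocalBox PL)
    (q : ℝ) (hq0 : 0 ≤ q) (hq1 : q ≤ 1)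
    (hmix : ∀ x y ab, P x y ab = q * Piso x y ab + (1 - q) * PL x y ab) :
    (∀ DP : Protocol n, ∃ DP' : Protocol n, NLval n P DP ≤ NLval n Piso DP') ∧
    Dnl n P ≤ Dnl n Piso :=
  distillable_nonlocality_le_general n P Piso PL hPiso hPLloc q hq0 hq1 hmix
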